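/- In the 3DSMI instance of dimension 3 with rank-1 edges 0→1, 1→2, 2→3, 3→4, 4→5, 5→0, 6→4, 7→8, 8→0, rank-2 edges 4→8, 8→6, 0→7, 1→5, 5→3, 3→1, and rank-3 edge 4→2, every matching consisting of exactly one family can be completed: for each directed 3-cycle C of the graph there exists another directed 3-cycle of the graph vertex-disjoint from C. -/

import Mathlib

/-!
The family `0 → 7 → 8 → 0` completes every family avoiding its vertices. Since `7` lies only on
the edges `0 → 7 → 8`, the remaining families are those through `0` or `8`, with vertex sets
`{0, 1, 5}`, `{0, 7, 8}` and `{4, 6, 8}`; these are completed by `{4, 6, 8}`, `{3, 4, 5}` and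
`{0, 1, 5}` respectively.
-/

/-- A 3DSMI instance of dimension `n`: a directed graph on a vertex set `V`
partitioned into three genders (men, women, dogs), each of size `n`, where every
edge goes from gender `g` to gender `g+1`, together with a rank function such that
for every vertex of out-degree `k` the ranks of its outgoing edges are exactly
`1, …, k`. -/
structure TDSMI (V : Type) [Fintype V] [DecidableEq V] (n : ℕ) where
  E : V → V → Bool
  r : V → V → ℕ
  gender : V → Fin 3
  gender_card : ∀ g : Fin 3, (Finset.univ.filter fun v => gender v = g).card = n
  edge_gender : ∀ v w : V, E v w → gender w = gender v + 1
  rank_bij : ∀ v : V,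
    (Finset.univ.filter fun w => E v w).image (r v)
      = Finset.Icc 1 (Finset.univ.filter fun w => E v w).card

namespace TDSMI

variable {V : Type} [Fintype V] [DecidableEq V] {n : ℕ}

/-- A family: a directed 3-cycle `a → b → c → a`. -/
def IsFamily (G : TDSMI V n) (a b c : V) : Prop :=
  G.E a b ∧ G.E b c ∧ G.E c a

/-- `v` is one of the vertices of the triple `t`. -/
def MemTriple (v : V) (t : V × V × V) : Prop :=
  v = t.1 ∨ v = t.2.1 ∨ v = t.2.2

/-- A matching: a set of pairwise vertex-disjoint families. -/
def IsMatching (G : TDSMI V n) (F : Finset (V × V × V)) : Prop :=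
  (∀ t ∈ F, G.IsFamily t.1 t.2.1 t.2.2) ∧
  ∀ t ∈ F, ∀ t' ∈ F, t ≠ t' → ∀ v : V, ¬ (MemTriple v t ∧ MemTriple v t')

/-- `w` is the vertex that the edge leaving `v` inside its family of `F` points to. -/
def MatchedTo (F : Finset (V × V × V)) (v w : V) : Prop :=
  ∃ t ∈ F, (t.1 = v ∧ t.2.1 = w) ∨ (t.2.1 = v ∧ t.2.2 = w) ∨ (t.2.2 = v ∧ t.1 = w)

/-- `r(v,w) < R_F(v)`: the rank of the edge `v → w` is smaller than the rank of `v` in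
the matching `F` (if `v` is in no family of `F`, its rank is `+∞` and this holds
vacuously). -/
def Prefers (G : TDSMI V n) (F : Finset (V × V × V)) (v w : V) : Prop :=
  ∀ u : V, MatchedTo F v u → G.r v w < G.r v u

/-- The directed 3-cycle `(a, b, c)` blocks the matching `F`. -/
def Blocks (G : TDSMI V n) (F : Finset (V × V × V)) (a b c : V) : Prop :=
  G.IsFamily a b c ∧ G.Prefers F a b ∧ G.Prefers F b c ∧ G.Prefers F c a

/-- A matching is weakly stable if no directed 3-cycle blocks it. -/
def WeaklyStable (G : TDSMI V n) (F : Finset (V × V × V)) : Prop :=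
  ∀ a b c : V, ¬ G.Blocks F a b c

end TDSMI

def rank1Edges : List (ℕ × ℕ) := [(0,1),(1,2),(2,3),(3,4),(4,5),(5,0),(6,4),(7,8),(8,0)]
def rank2Edges : List (ℕ × ℕ) := [(4,8),(8,6),(0,7),(1,5),(5,3),(3,1)]
def rank3Edges : List (ℕ × ℕ) := [(4,2)]

/-- The 3DSMI instance of dimension 3 from Fig. 2 of the paper. -/
def G2 : TDSMI (Fin 9) 3 where
  E v w := decide ((v.val, w.val) ∈ rank1Edges ++ rank2Edges ++ rank3Edges)
  r v w :=
    if (v.val, w.val) ∈ rank1Edges then 1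
    else if (v.val, w.val) ∈ rank2Edges then 2
    else if (v.val, w.val) ∈ rank3Edges then 3
    else 0
  gender v := ⟨v.val % 3, Nat.mod_lt _ (by norm_num)⟩
  gender_card := by decide
  edge_gender := by decide
  rank_bij := by decide

namespace TDSMI

instance {V : Type} [Fintype V] [DecidableEq V] {n : ℕ} (G : TDSMI V n) (a b c : V) :
    Decidable (G.IsFamily a b c) :=
  inferInstanceAs (Decidable (_ ∧ _ ∧ _))

theorem forall_not_memTriple_iff_disjoint {V : Type} [DecidableEq V] (a b c a' b' c' : V) :
    (∀ v : V, ¬ (MemTriple v (a, b, c) ∧ MemTriple v (a', b', c'))) ↔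
      Disjoint ({a, b, c} : Finset V) {a', b', c'} := by
  simp only [Finset.disjoint_left, MemTriple, Finset.mem_insert, Finset.mem_singleton, not_and]

end TDSMI

theorem G2_vertices_of_isFamily_of_not_disjoint_078 (a b c : Fin 9) (h : G2.IsFamily a b c)
    (hmeet : ¬ Disjoint ({a, b, c} : Finset (Fin 9)) {0, 7, 8}) :
    ({a, b, c} : Finset (Fin 9)) = {0, 1, 5} ∨ ({a, b, c} : Finset (Fin 9)) = {0, 7, 8} ∨
      ({a, b, c} : Finset (Fin 9)) = {4, 6, 8} := by
  revert a b c
  decide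

/-- Every one-family matching of this instance can be completed: for each directed
3-cycle of the graph there is another directed 3-cycle vertex-disjoint from it. -/
theorem stmt_11 :
    ∀ a b c : Fin 9, G2.IsFamily a b c →
      ∃ a' b' c' : Fin 9, G2.IsFamily a' b' c' ∧
        ∀ v : Fin 9, ¬ (TDSMI.MemTriple v (a, b, c) ∧ TDSMI.MemTriple v (a', b', c')) := by
  intro a b c h
  simp only [TDSMI.forall_not_memTriple_iff_disjoint]
  by_cases hmeet : Disjoint ({a, b, c} : Finset (Fin 9)) {0, 7, 8}
  · exact ⟨0, 7, 8, by decide, hmeet⟩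
  rcases G2_vertices_of_isFamily_of_not_disjoint_078 a b c h hmeet with hv | hv | hv <;> rw [hv]
  · exact ⟨6, 4, 8, by decide, by decide⟩
  · exact ⟨3, 4, 5, by decide, by decide⟩
  · exact ⟨0, 1, 5, by decide, by decide⟩
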